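/- Let N, n, m ≥ 1, let A ∈ ℝ^{N×N}, B₀ ∈ ℝ^{N×m}, B̃ ∈ ℝ^{N×(mN)}, let P ∈ ℝ^{N×N} be symmetric positive definite with smallest and largest eigenvalues λ_min(P), λ_max(P), let ρ > 0, c_x > 0, c_u > 0, let K : ℝ^N → ℝ^{m×N} and τ : ℝ^N → (0,∞) be functions, and for z ∈ ℝ^N let A_K(z) = A + B₀·K(z) + B̃·(K(z) ⊗ z). Assume that for every z ∈ ℝ^N the symmetric block matrix [[P⁻¹·A_K(z) + A_K(z)ᵀ·P⁻¹ + ρ·P⁻² + τ(z)·P⁻², I_N, K(z)ᵀ], [I_N, −(τ(z)/(2c_x²))·I_N, 0], [K(z), 0, −(τ(z)/(2c_u²))·I_m]] is negative semidefinite. Let L_Φ > 0 and let Φ̂ : ℝⁿ → ℝ^N satisfy ‖ξ‖ ≤ ‖Φ̂(ξ)‖ ≤ L_Φ‖ξ‖ for all ξ ∈ ℝⁿ. Let x : [0,∞) → ℝⁿ and r : [0,∞) → ℝ^N be such that the map t ↦ Φ̂(x(t)) is differentiable with derivative (d/dt)Φ̂(x(t)) = A_K(Φ̂(x(t)))·Φ̂(x(t))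 + r(t) for all t ≥ 0, and such that ‖r(t)‖ ≤ c_x‖Φ̂(x(t))‖ + c_u‖K(Φ̂(x(t)))·Φ̂(x(t))‖ for all t ≥ 0. Then for all t ≥ 0, ‖x(t)‖ ≤ L_Φ·√(λ_max(P)/λ_min(P))·‖x(0)‖·exp(−(ρ·λ_min(P)/(2·λ_max(P)²))·t). -/

import Mathlib

open Matrix

/-- The Euclidean norm of a vector in `ℝ^k`. -/
noncomputable def eucNorm {k : ℕ} (v : Fin k → ℝ) : ℝ :=
  ‖(EuclideanSpace.equiv (Fin k) ℝ).symm v‖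

/-- A real matrix is negative semidefinite if it is symmetric (Hermitian) and its
quadratic form is nonpositive. -/
def NegSemidef {k : Type*} [Fintype k] (M : Matrix k k ℝ) : Prop :=
  M.IsHermitian ∧ ∀ v : k → ℝ, v ⬝ᵥ M.mulVec v ≤ 0

/-- The Kronecker product `M ⊗ z` of a matrix `M ∈ ℝ^{m×N}` with a column vector
`z ∈ ℝ^N`, yielding an `(mN) × N` matrix (rows indexed by `Fin m × Fin N`). -/
def kronMV {m N : ℕ} (M : Matrix (Fin m) (Fin N) ℝ) (z : Fin N → ℝ) :
    Matrix (Fin m × Fin N) (Fin N) ℝ :=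
  Matrix.of fun p j => M p.1 j * z p.2

/-- A symmetric 3×3 block matrix with block sizes `α`, `β`, `γ`. -/
def blk3 {α β γ : Type*} (A11 : Matrix α α ℝ) (A12 : Matrix α β ℝ) (A13 : Matrix α γ ℝ)
    (A21 : Matrix β α ℝ) (A22 : Matrix β β ℝ) (A23 : Matrix β γ ℝ)
    (A31 : Matrix γ α ℝ) (A32 : Matrix γ β ℝ) (A33 : Matrix γ γ ℝ) :
    Matrix ((α ⊕ β) ⊕ γ) ((α ⊕ β) ⊕ γ) ℝ :=
  Matrix.fromBlocks (Matrix.fromBlocks A11 A12 A21 A22) (Matrix.fromRows A13 A23)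
    (Matrix.fromCols A31 A32) A33

/-- The closed-loop matrix `A_K(z) = A + B₀ K(z) + B̃ (K(z) ⊗ z)`. -/
def closedLoop {N m : ℕ} (A : Matrix (Fin N) (Fin N) ℝ) (B0 : Matrix (Fin N) (Fin m) ℝ)
    (Bt : Matrix (Fin N) (Fin m × Fin N) ℝ) (Kz : Matrix (Fin m) (Fin N) ℝ)
    (z : Fin N → ℝ) : Matrix (Fin N) (Fin N) ℝ :=
  A + B0 * Kz + Bt * kronMV Kz z

/-!
`V(t) = Φ̂(x t)ᵀ P⁻¹ Φ̂(x t)` is a Lyapunov function. Testing the LMI against the vector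
`(z, (2c_x²/τ) z, (2c_u²/τ) K z)` bounds `zᵀ(P⁻¹A_K + A_KᵀP⁻¹ + (ρ + τ)P⁻²)z` by
`-(2c_x²/τ)‖z‖² - (2c_u²/τ)‖Kz‖²`, and by Young's inequality these two terms together with
`τ‖P⁻¹z‖²` absorb the residual term `2zᵀP⁻¹r`. Hence `V' ≤ -ρ‖P⁻¹z‖² ≤ -(ρ/λ_max) V`, so `V`
decays like `exp(-(ρ/λ_max) t)` (Grönwall). Comparing `V` with `‖z‖²` through
`λ_min P⁻¹ ≤ 1 ≤ λ_max P⁻¹`, taking square roots, and using `λ_min ≤ λ_max` to weaken the rate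
gives the estimate.
-/

open Set
open scoped MatrixOrder

lemma eucNorm_nonneg {k : ℕ} (v : Fin k → ℝ) : 0 ≤ eucNorm v := norm_nonneg _

lemma eucNorm_sq {k : ℕ} (v : Fin k → ℝ) : eucNorm v ^ 2 = v ⬝ᵥ v := by
  rw [eucNorm, EuclideanSpace.norm_eq, Real.sq_sqrt (by positivity)]
  simp [dotProduct, sq]

lemma dotProduct_le_eucNorm_mul_eucNorm {k : ℕ} (v w : Fin k → ℝ) :
    v ⬝ᵥ w ≤ eucNorm v * eucNorm w := by
  simpa [eucNorm, PiLp.inner_apply, dotProduct, mul_comm] using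
    real_inner_le_norm ((EuclideanSpace.equiv (Fin k) ℝ).symm v)
      ((EuclideanSpace.equiv (Fin k) ℝ).symm w)

lemma two_mul_dotProduct_le_of_eucNorm_le {k : ℕ} {w r : Fin k → ℝ} {a b τ : ℝ} (hτ : 0 < τ)
    (hr : eucNorm r ≤ a + b) :
    2 * (w ⬝ᵥ r) ≤ τ * eucNorm w ^ 2 + 2 / τ * (a ^ 2 + b ^ 2) := by
  have hτ2 : 0 < τ / 2 := half_pos hτ
  calc 2 * (w ⬝ᵥ r) ≤ 2 * eucNorm w * a + 2 * eucNorm w * b := by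
        nlinarith [dotProduct_le_eucNorm_mul_eucNorm w r, eucNorm_nonneg w]
    _ ≤ (τ / 2 * eucNorm w ^ 2 + (τ / 2)⁻¹ * a ^ 2)
        + (τ / 2 * eucNorm w ^ 2 + (τ / 2)⁻¹ * b ^ 2) :=
        add_le_add (two_mul_le_add_mul_sq hτ2) (two_mul_le_add_mul_sq hτ2)
    _ = τ * eucNorm w ^ 2 + 2 / τ * (a ^ 2 + b ^ 2) := by
        rw [inv_div]; ring

namespace Matrix

section Loewner

variable {ι : Type*} [Fintype ι]

lemma dotProduct_mulVec_le_of_le {A B : Matrix ι ι ℝ} (h : A ≤ B) (v : ι → ℝ) :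
    v ⬝ᵥ A *ᵥ v ≤ v ⬝ᵥ B *ᵥ v := by
  simpa [sub_mulVec] using (Matrix.le_iff.mp h).dotProduct_mulVec_nonneg v

variable [DecidableEq ι]

lemma IsHermitian.cfc_le_cfc {A : Matrix ι ι ℝ} (hA : A.IsHermitian) {f g : ℝ → ℝ}
    (h : ∀ i, f (hA.eigenvalues i) ≤ g (hA.eigenvalues i)) : cfc f A ≤ cfc g A := by
  refine cfc_mono (fun x hx => ?_) (A.finite_real_spectrum.continuousOn _)
    (A.finite_real_spectrum.continuousOn _)
  rw [hA.spectrum_real_eq_range_eigenvalues] at hx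
  obtain ⟨i, rfl⟩ := hx
  exact h i

namespace PosDef

variable {P : Matrix ι ι ℝ} (hP : P.PosDef)
include hP

lemma eigenvalues_le_iSup (i : ι) : hP.1.eigenvalues i ≤ ⨆ j, hP.1.eigenvalues j :=
  le_ciSup (Finite.bddAbove_range _) i

lemma iInf_eigenvalues_le (i : ι) : ⨅ j, hP.1.eigenvalues j ≤ hP.1.eigenvalues i :=
  ciInf_le (Finite.bddBelow_range _) i

lemma iInf_eigenvalues_pos [Nonempty ι] : 0 < ⨅ i, hP.1.eigenvalues i := by
  obtain ⟨i, hi⟩ := exists_eq_ciInf_of_finite (f := hP.1.eigenvalues)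
  exact hi ▸ hP.eigenvalues_pos i

lemma iInf_eigenvalues_le_iSup [Nonempty ι] :
    ⨅ i, hP.1.eigenvalues i ≤ ⨆ i, hP.1.eigenvalues i :=
  ciInf_le_ciSup (Finite.bddBelow_range _) (Finite.bddAbove_range _)

lemma iSup_eigenvalues_pos [Nonempty ι] : 0 < ⨆ i, hP.1.eigenvalues i :=
  hP.iInf_eigenvalues_pos.trans_le hP.iInf_eigenvalues_le_iSup

lemma transpose_inv : (P⁻¹)ᵀ = P⁻¹ := by
  rw [transpose_nonsing_inv, ← conjTranspose_eq_transpose_of_trivial, hP.1.eq]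

lemma inv_eq_cfc : P⁻¹ = cfc (·⁻¹ : ℝ → ℝ) P := by
  rw [nonsing_inv_eq_ringInverse, cfc_ringInverse_id _ hP.isUnit hP.1.isSelfAdjoint]

lemma smul_inv_eq_cfc (c : ℝ) : c • P⁻¹ = cfc (fun x => c * x⁻¹) P := by
  rw [hP.inv_eq_cfc, cfc_const_mul _ _ _ (P.finite_real_spectrum.continuousOn _)]

lemma one_le_iSup_eigenvalues_smul_inv : 1 ≤ (⨆ i, hP.1.eigenvalues i) • P⁻¹ := by
  rw [hP.smul_inv_eq_cfc, ← cfc_one ℝ P (ha := hP.1.isSelfAdjoint)]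
  refine hP.1.cfc_le_cfc fun i => ?_
  simpa [le_mul_inv_iff₀ (hP.eigenvalues_pos i)] using hP.eigenvalues_le_iSup i

lemma iInf_eigenvalues_smul_inv_le_one : (⨅ i, hP.1.eigenvalues i) • P⁻¹ ≤ 1 := by
  rw [hP.smul_inv_eq_cfc, ← cfc_one ℝ P (ha := hP.1.isSelfAdjoint)]
  refine hP.1.cfc_le_cfc fun i => ?_
  simpa [mul_inv_le_iff₀ (hP.eigenvalues_pos i)] using hP.iInf_eigenvalues_le i

lemma inv_le_iSup_eigenvalues_smul_inv_mul_inv :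
    P⁻¹ ≤ (⨆ i, hP.1.eigenvalues i) • (P⁻¹ * P⁻¹) := by
  have hcont : ∀ f : ℝ → ℝ, ContinuousOn f (spectrum ℝ P) :=
    P.finite_real_spectrum.continuousOn
  rw [hP.inv_eq_cfc, ← cfc_mul _ _ _ (hcont _) (hcont _), ← cfc_const_mul _ _ _ (hcont _)]
  refine hP.1.cfc_le_cfc fun i => ?_
  have hi := hP.eigenvalues_pos i
  field_simp
  simpa using hP.eigenvalues_le_iSup i

end PosDef

end Loewner

end Matrix

lemma NegSemidef.blk3_quadForm_le_zero {ι κ : Type*} [Fintype ι] [Fintype κ] [DecidableEq ι]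
    [DecidableEq κ] {M : Matrix ι ι ℝ} {K : Matrix κ ι ℝ} {a b : ℝ}
    (h : NegSemidef (blk3 M (1 : Matrix ι ι ℝ) Kᵀ 1 ((-a) • 1) 0 K 0 ((-b) • 1)))
    (z : ι → ℝ) :
    z ⬝ᵥ M *ᵥ z + a⁻¹ * (z ⬝ᵥ z) + b⁻¹ * (K *ᵥ z ⬝ᵥ K *ᵥ z) ≤ 0 := by
  have key := h.2 (Sum.elim (Sum.elim z (a⁻¹ • z)) (b⁻¹ • (K *ᵥ z)))
  simp only [blk3, fromBlocks_mulVec, fromRows_mulVec, fromCols_mulVec_sumElim,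
    sumElim_dotProduct_sumElim, Sum.elim_comp_inl, Sum.elim_comp_inr, zero_mulVec, one_mulVec,
    neg_smul, neg_mulVec, smul_mulVec, mulVec_smul, dotProduct_add, dotProduct_neg,
    dotProduct_smul, smul_dotProduct, smul_eq_mul, dotProduct_zero, add_zero] at key
  rw [dotProduct_mulVec z Kᵀ, vecMul_transpose] at key
  have ha : a * (a⁻¹ * a⁻¹) = a⁻¹ := by
    rcases eq_or_ne a 0 with rfl | ha <;> field_simp
  have hb : b * (b⁻¹ * b⁻¹) = b⁻¹ := by
    rcases eq_or_ne b 0 with rfl | hb <;> field_simp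
  linear_combination key + (z ⬝ᵥ z) * ha + (K *ᵥ z ⬝ᵥ K *ᵥ z) * hb

lemma two_mul_dotProduct_mulVec_le_of_negSemidef {N m : ℕ} {Q Acl : Matrix (Fin N) (Fin N) ℝ}
    (hQ : Qᵀ = Q) {K : Matrix (Fin m) (Fin N) ℝ} {ρ τ cx cu : ℝ} (hτ : 0 < τ)
    (hLMI : NegSemidef (blk3 (Q * Acl + Aclᵀ * Q + ρ • (Q * Q) + τ • (Q * Q)) 1 Kᵀ
      1 ((-(τ / (2 * cx ^ 2))) • (1 : Matrix (Fin N) (Fin N) ℝ)) 0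
      K 0 ((-(τ / (2 * cu ^ 2))) • (1 : Matrix (Fin m) (Fin m) ℝ))))
    {z r : Fin N → ℝ} (hr : eucNorm r ≤ cx * eucNorm z + cu * eucNorm (K *ᵥ z)) :
    2 * (z ⬝ᵥ Q *ᵥ (Acl *ᵥ z + r)) ≤ -ρ * (z ⬝ᵥ (Q * Q) *ᵥ z) := by
  have hsymm : ∀ v w : Fin N → ℝ, v ⬝ᵥ Q *ᵥ w = Q *ᵥ v ⬝ᵥ w := fun v w => by
    rw [dotProduct_mulVec, ← mulVec_transpose, hQ, dotProduct_comm]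
  have hlmi := hLMI.blk3_quadForm_le_zero z
  rw [inv_div, inv_div] at hlmi
  have hquad : z ⬝ᵥ (Q * Acl + Aclᵀ * Q + ρ • (Q * Q) + τ • (Q * Q)) *ᵥ z
      = 2 * (z ⬝ᵥ Q *ᵥ (Acl *ᵥ z)) + (ρ + τ) * (z ⬝ᵥ (Q * Q) *ᵥ z) := by
    simp only [add_mulVec, smul_mulVec, dotProduct_add, dotProduct_smul, smul_eq_mul,
      ← mulVec_mulVec]
    rw [dotProduct_mulVec z Aclᵀ, vecMul_transpose, dotProduct_comm (Acl *ᵥ z), ← hsymm]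
    ring
  have hres := two_mul_dotProduct_le_of_eucNorm_le (w := Q *ᵥ z) hτ hr
  have hQz : eucNorm (Q *ᵥ z) ^ 2 = z ⬝ᵥ (Q * Q) *ᵥ z := by
    rw [eucNorm_sq, ← mulVec_mulVec, hsymm z]
  rw [hQz, mul_pow, mul_pow, eucNorm_sq, eucNorm_sq, ← hsymm] at hres
  rw [hquad] at hlmi
  rw [mulVec_add, dotProduct_add]
  linear_combination hlmi + hres

lemma HasDerivWithinAt.dotProduct {ι : Type*} [Fintype ι] {f g : ℝ → ι → ℝ} {f' g' : ι → ℝ}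
    {s : Set ℝ} {t : ℝ} (hf : HasDerivWithinAt f f' s t) (hg : HasDerivWithinAt g g' s t) :
    HasDerivWithinAt (fun u => f u ⬝ᵥ g u) (f' ⬝ᵥ g t + f t ⬝ᵥ g') s t := by
  show HasDerivWithinAt (fun u => ∑ i, f u i * g u i) (∑ i, f' i * g t i + ∑ i, f t i * g' i) s t
  rw [← Finset.sum_add_distrib]
  exact HasDerivWithinAt.fun_sum fun i _ =>
    (hasDerivWithinAt_pi.mp hf i).mul (hasDerivWithinAt_pi.mp hg i)

lemma HasDerivWithinAt.mulVec {ι κ : Type*} [Fintype κ] (A : Matrix ι κ ℝ) {f : ℝ → κ → ℝ}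
    {f' : κ → ℝ} {s : Set ℝ} {t : ℝ} (hf : HasDerivWithinAt f f' s t) :
    HasDerivWithinAt (fun u => A *ᵥ f u) (A *ᵥ f') s t :=
  hasDerivWithinAt_pi.mpr fun i => HasDerivWithinAt.fun_sum fun j _ =>
    (hasDerivWithinAt_pi.mp hf j).const_mul (A i j)

lemma HasDerivWithinAt.dotProduct_mulVec_self {ι : Type*} [Fintype ι] {Q : Matrix ι ι ℝ}
    (hQ : Qᵀ = Q) {f : ℝ → ι → ℝ} {f' : ι → ℝ} {s : Set ℝ} {t : ℝ}
    (hf : HasDerivWithinAt f f' s t) :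
    HasDerivWithinAt (fun u => f u ⬝ᵥ Q *ᵥ f u) (2 * (f t ⬝ᵥ Q *ᵥ f')) s t := by
  convert hf.dotProduct (hf.mulVec Q) using 1
  rw [dotProduct_mulVec f' Q, ← mulVec_transpose, hQ, dotProduct_comm (Q *ᵥ f')]
  ring

lemma le_mul_exp_of_hasDerivWithinAt_le_neg_mul {V V' : ℝ → ℝ} {α : ℝ}
    (hV : ∀ t, 0 ≤ t → HasDerivWithinAt V (V' t) (Ici 0) t)
    (hV' : ∀ t, 0 ≤ t → V' t ≤ -α * V t) {t : ℝ} (ht : 0 ≤ t) :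
    V t ≤ V 0 * Real.exp (-α * t) := by
  have h := le_gronwallBound_of_liminf_deriv_right_le (δ := V 0) (K := -α) (ε := 0)
    (fun s hs => (hV s hs.1).continuousWithinAt.mono Icc_subset_Ici_self)
    (fun s hs r hr => ((hV s hs.1).mono (Ici_subset_Ici.mpr hs.1)).liminf_right_slope_le hr)
    le_rfl (fun s hs => by simpa using hV' s hs.1) t (right_mem_Icc.mpr ht)
  rwa [gronwallBound_ε0, sub_zero] at h

lemma le_sqrt_mul_mul_exp_of_sq_le {a B C k t : ℝ} (hB : 0 ≤ B) (hC : 0 ≤ C)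
    (h : a ^ 2 ≤ C * B ^ 2 * Real.exp (-k * t)) :
    a ≤ √C * B * Real.exp (-(k / 2) * t) := by
  have hsq : C * B ^ 2 * Real.exp (-k * t) = C * (B * Real.exp (-(k / 2) * t)) ^ 2 := by
    rw [mul_pow, ← Real.exp_nat_mul]
    ring_nf
  calc a ≤ √(a ^ 2) := by rw [Real.sqrt_sq_eq_abs]; exact le_abs_self a
    _ ≤ √(C * B ^ 2 * Real.exp (-k * t)) := Real.sqrt_le_sqrt h
    _ = √C * B * Real.exp (-(k / 2) * t) := by
      rw [hsq, Real.sqrt_mul hC, Real.sqrt_sq (by positivity), mul_assoc]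

section Lyapunov

variable {N : ℕ} [NeZero N] {P : Matrix (Fin N) (Fin N) ℝ} (hP : P.PosDef)
include hP

lemma dotProduct_inv_mulVec_le_mul_exp_of_negSemidef {m : ℕ} {ρ cx cu : ℝ} (hρ : 0 ≤ ρ)
    {Acl : ℝ → Matrix (Fin N) (Fin N) ℝ} {K : ℝ → Matrix (Fin m) (Fin N) ℝ} {τ : ℝ → ℝ}
    {z r : ℝ → Fin N → ℝ} (hτ : ∀ t, 0 ≤ t → 0 < τ t)
    (hLMI : ∀ t, 0 ≤ t → NegSemidef (blk3
      (P⁻¹ * Acl t + (Acl t)ᵀ * P⁻¹ + ρ • (P⁻¹ * P⁻¹) + τ t • (P⁻¹ * P⁻¹)) 1 (K t)ᵀ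
      1 ((-(τ t / (2 * cx ^ 2))) • (1 : Matrix (Fin N) (Fin N) ℝ)) 0
      (K t) 0 ((-(τ t / (2 * cu ^ 2))) • (1 : Matrix (Fin m) (Fin m) ℝ))))
    (hz : ∀ t, 0 ≤ t → HasDerivWithinAt z (Acl t *ᵥ z t + r t) (Ici 0) t)
    (hr : ∀ t, 0 ≤ t → eucNorm (r t) ≤ cx * eucNorm (z t) + cu * eucNorm (K t *ᵥ z t))
    {t : ℝ} (ht : 0 ≤ t) :
    z t ⬝ᵥ P⁻¹ *ᵥ z t
      ≤ (z 0 ⬝ᵥ P⁻¹ *ᵥ z 0) * Real.exp (-(ρ / ⨆ i, hP.1.eigenvalues i) * t) := by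
  refine le_mul_exp_of_hasDerivWithinAt_le_neg_mul
    (fun s hs => (hz s hs).dotProduct_mulVec_self hP.transpose_inv) (fun s hs => ?_) ht
  have hV := dotProduct_mulVec_le_of_le hP.inv_le_iSup_eigenvalues_smul_inv_mul_inv (z s)
  rw [smul_mulVec, dotProduct_smul, smul_eq_mul] at hV
  calc _ ≤ -ρ * (z s ⬝ᵥ (P⁻¹ * P⁻¹) *ᵥ z s) :=
        two_mul_dotProduct_mulVec_le_of_negSemidef hP.transpose_inv (hτ s hs) (hLMI s hs)
          (hr s hs)
    _ ≤ _ := by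
        rw [neg_mul, neg_mul, neg_le_neg_iff, div_mul_eq_mul_div,
          div_le_iff₀ hP.iSup_eigenvalues_pos]
        linarith [mul_le_mul_of_nonneg_left hV hρ]

lemma eucNorm_sq_le_of_dotProduct_inv_mulVec_le {v w : Fin N → ℝ} {c : ℝ} (hc : 0 ≤ c)
    (h : v ⬝ᵥ P⁻¹ *ᵥ v ≤ (w ⬝ᵥ P⁻¹ *ᵥ w) * c) :
    eucNorm v ^ 2 ≤
      (⨆ i, hP.1.eigenvalues i) / (⨅ i, hP.1.eigenvalues i) * eucNorm w ^ 2 * c := by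
  have hupper := dotProduct_mulVec_le_of_le hP.one_le_iSup_eigenvalues_smul_inv v
  have hlower := dotProduct_mulVec_le_of_le hP.iInf_eigenvalues_smul_inv_le_one w
  simp only [one_mulVec, smul_mulVec, dotProduct_smul, smul_eq_mul] at hupper hlower
  calc eucNorm v ^ 2 ≤ (⨆ i, hP.1.eigenvalues i) * ((w ⬝ᵥ P⁻¹ *ᵥ w) * c) := by
        rw [eucNorm_sq]
        exact hupper.trans (mul_le_mul_of_nonneg_left h hP.iSup_eigenvalues_pos.le)
    _ ≤ (⨆ i, hP.1.eigenvalues i) * (w ⬝ᵥ w / (⨅ i, hP.1.eigenvalues i) * c) := by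
        gcongr
        · exact hP.iSup_eigenvalues_pos.le
        · rwa [le_div_iff₀ hP.iInf_eigenvalues_pos, mul_comm]
    _ = _ := by
        rw [eucNorm_sq]
        ring

end Lyapunov

theorem stmt5_general (N n m : ℕ) (hN : 1 ≤ N)
    (A : Matrix (Fin N) (Fin N) ℝ) (B0 : Matrix (Fin N) (Fin m) ℝ)
    (Bt : Matrix (Fin N) (Fin m × Fin N) ℝ)
    (P : Matrix (Fin N) (Fin N) ℝ) (hP : P.PosDef)
    (ρ cx cu : ℝ) (hρ : 0 < ρ)
    (K : (Fin N → ℝ) → Matrix (Fin m) (Fin N) ℝ) (τ : (Fin N → ℝ) → ℝ)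
    (hτ : ∀ z, 0 < τ z)
    (hLMI : ∀ z : Fin N → ℝ,
      NegSemidef (blk3
        (P⁻¹ * closedLoop A B0 Bt (K z) z + (closedLoop A B0 Bt (K z) z)ᵀ * P⁻¹
          + ρ • (P⁻¹ * P⁻¹) + τ z • (P⁻¹ * P⁻¹)) 1 (K z)ᵀ
        1 ((-(τ z / (2 * cx ^ 2))) • (1 : Matrix (Fin N) (Fin N) ℝ)) 0
        (K z) 0 ((-(τ z / (2 * cu ^ 2))) • (1 : Matrix (Fin m) (Fin m) ℝ))))
    (LΦ : ℝ) (hLΦ : 0 < LΦ) (Φ : (Fin n → ℝ) → (Fin N → ℝ))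
    (hΦ : ∀ ξ : Fin n → ℝ, eucNorm ξ ≤ eucNorm (Φ ξ) ∧ eucNorm (Φ ξ) ≤ LΦ * eucNorm ξ)
    (x : ℝ → Fin n → ℝ) (r : ℝ → Fin N → ℝ)
    (hdyn : ∀ t : ℝ, 0 ≤ t → HasDerivWithinAt (fun s => Φ (x s))
      ((closedLoop A B0 Bt (K (Φ (x t))) (Φ (x t))).mulVec (Φ (x t)) + r t) (Set.Ici 0) t)
    (hr : ∀ t : ℝ, 0 ≤ t →
      eucNorm (r t) ≤ cx * eucNorm (Φ (x t)) + cu * eucNorm ((K (Φ (x t))).mulVec (Φ (x t)))) :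
    ∀ t : ℝ, 0 ≤ t → eucNorm (x t) ≤
      LΦ * Real.sqrt ((⨆ i, hP.1.eigenvalues i) / (⨅ i, hP.1.eigenvalues i)) * eucNorm (x 0) *
        Real.exp (-(ρ * (⨅ i, hP.1.eigenvalues i) / (2 * (⨆ i, hP.1.eigenvalues i) ^ 2)) * t) := by
  have : NeZero N := ⟨by omega⟩
  set lmin := ⨅ i, hP.1.eigenvalues i
  set lmax := ⨆ i, hP.1.eigenvalues i
  have hlmin : 0 < lmin := hP.iInf_eigenvalues_pos
  have hlmax : 0 < lmax := hP.iSup_eigenvalues_pos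
  intro t ht
  have hdecay := dotProduct_inv_mulVec_le_mul_exp_of_negSemidef hP hρ.le
    (fun s _ => hτ _) (fun s _ => hLMI _) hdyn hr ht
  have hsq : eucNorm (x t) ^ 2 ≤ lmax / lmin * (LΦ * eucNorm (x 0)) ^ 2
      * Real.exp (-(ρ / lmax) * t) := by
    calc eucNorm (x t) ^ 2 ≤ eucNorm (Φ (x t)) ^ 2 :=
          pow_le_pow_left₀ (eucNorm_nonneg _) (hΦ _).1 2
      _ ≤ lmax / lmin * eucNorm (Φ (x 0)) ^ 2 * Real.exp (-(ρ / lmax) * t) :=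
          eucNorm_sq_le_of_dotProduct_inv_mulVec_le hP (Real.exp_nonneg _) hdecay
      _ ≤ _ := by
          have hratio := div_pos hlmax hlmin
          gcongr
          exacts [eucNorm_nonneg _, (hΦ _).2]
  have hrate : ρ * lmin / (2 * lmax ^ 2) ≤ ρ / lmax / 2 := by
    rw [div_div, div_le_div_iff₀ (by positivity) (by positivity)]
    nlinarith [mul_le_mul_of_nonneg_left hP.iInf_eigenvalues_le_iSup (mul_nonneg hρ.le hlmax.le)]
  have hx0 := eucNorm_nonneg (x 0)
  calc eucNorm (x t) ≤ √(lmax / lmin) * (LΦ * eucNorm (x 0)) * Real.exp (-(ρ / lmax / 2) * t) :=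
        le_sqrt_mul_mul_exp_of_sq_le (by positivity) (div_pos hlmax hlmin).le hsq
    _ ≤ √(lmax / lmin) * (LΦ * eucNorm (x 0)) * Real.exp (-(ρ * lmin / (2 * lmax ^ 2)) * t) := by
        gcongr
    _ = _ := by ring

theorem stmt5 (N n m : ℕ) (hN : 1 ≤ N) (hn : 1 ≤ n) (hm : 1 ≤ m)
    (A : Matrix (Fin N) (Fin N) ℝ) (B0 : Matrix (Fin N) (Fin m) ℝ)
    (Bt : Matrix (Fin N) (Fin m × Fin N) ℝ)
    (P : Matrix (Fin N) (Fin N) ℝ) (hP : P.PosDef)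
    (ρ cx cu : ℝ) (hρ : 0 < ρ) (hcx : 0 < cx) (hcu : 0 < cu)
    (K : (Fin N → ℝ) → Matrix (Fin m) (Fin N) ℝ) (τ : (Fin N → ℝ) → ℝ)
    (hτ : ∀ z, 0 < τ z)
    (hLMI : ∀ z : Fin N → ℝ,
      NegSemidef (blk3
        (P⁻¹ * closedLoop A B0 Bt (K z) z + (closedLoop A B0 Bt (K z) z)ᵀ * P⁻¹
          + ρ • (P⁻¹ * P⁻¹) + τ z • (P⁻¹ * P⁻¹)) 1 (K z)ᵀ
        1 ((-(τ z / (2 * cx ^ 2))) • (1 : Matrix (Fin N) (Fin N) ℝ)) 0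
        (K z) 0 ((-(τ z / (2 * cu ^ 2))) • (1 : Matrix (Fin m) (Fin m) ℝ))))
    (LΦ : ℝ) (hLΦ : 0 < LΦ) (Φ : (Fin n → ℝ) → (Fin N → ℝ))
    (hΦ : ∀ ξ : Fin n → ℝ, eucNorm ξ ≤ eucNorm (Φ ξ) ∧ eucNorm (Φ ξ) ≤ LΦ * eucNorm ξ)
    (x : ℝ → Fin n → ℝ) (r : ℝ → Fin N → ℝ)
    (hdyn : ∀ t : ℝ, 0 ≤ t → HasDerivWithinAt (fun s => Φ (x s))
      ((closedLoop A B0 Bt (K (Φ (x t))) (Φ (x t))).mulVec (Φ (x t)) + r t) (Set.Ici 0) t)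
    (hr : ∀ t : ℝ, 0 ≤ t →
      eucNorm (r t) ≤ cx * eucNorm (Φ (x t)) + cu * eucNorm ((K (Φ (x t))).mulVec (Φ (x t)))) :
    ∀ t : ℝ, 0 ≤ t → eucNorm (x t) ≤
      LΦ * Real.sqrt ((⨆ i, hP.1.eigenvalues i) / (⨅ i, hP.1.eigenvalues i)) * eucNorm (x 0) *
        Real.exp (-(ρ * (⨅ i, hP.1.eigenvalues i) / (2 * (⨆ i, hP.1.eigenvalues i) ^ 2)) * t) :=
  stmt5_general N n m hN A B0 Bt P hP ρ cx cu hρ K τ hτ hLMI LΦ hLΦ Φ hΦ x r hdyn hr
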